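/- Let G be a signed complete graph on V and H its mirrored double (mirror copy V', positive edges (u,u'), cross and mirror edges inheriting signs from G). The minimum number of disagreements over clusterings of H in which every cluster has equally many vertices from V and from V' equals 4 times the minimum number of disagreements over unconstrained clusterings of G. -/

import Mathlib

open Finset

/-- An edge `{u,v}` is a disagreement of clustering `c`: negative inside a cluster,
or positive between clusters. `sign u v = true` means positive. -/
def isDis {V : Type*} (sign : V → V → Bool) (c : V → ℕ) (u v : V) : Bool :=
  if c u = c v then !(sign u v) else sign u v

/-- Number of disagreements of a clustering (unordered edges). -/
def numDis {V : Type*} [Fintype V] [DecidableEq V] (sign : V → V → Bool) (c : V → ℕ) : ℕ :=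
  ((Finset.univ : Finset (V × V)).filter
    (fun p => p.1 ≠ p.2 ∧ isDis sign c p.1 p.2 = true)).card / 2

/-- Weight of a matched pair `(u,v)`: number of vertices `w ≠ u,v` on which the
signs to `u` and `v` differ, plus `1` if `(u,v)` is negative. -/
def pairW {V : Type*} [Fintype V] [DecidableEq V] (sign : V → V → Bool) (u v : V) : ℕ :=
  ((Finset.univ : Finset V).filter
    (fun w => w ≠ u ∧ w ≠ v ∧ sign u w ≠ sign v w)).card
  + (if sign u v = false then 1 else 0)

/-- The mirrored double of a signed graph on `V ⊕ V`: `inl` is the original copy,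
`inr` the mirror copy; `(u, u')` edges are positive, all others inherit signs. -/
def mirrorSign {V : Type*} [DecidableEq V] (sign : V → V → Bool) : V ⊕ V → V ⊕ V → Bool
  | Sum.inl u, Sum.inl v => sign u v
  | Sum.inr u, Sum.inr v => sign u v
  | Sum.inl u, Sum.inr v => if u = v then true else sign u v
  | Sum.inr u, Sum.inl v => if u = v then true else sign u v

/-!
Mirroring a clustering of `G` onto both copies turns each disagreement of `G` into four
disagreements of `H` (one in each copy and two across), and the mirror edges `(u, u')` lie inside
clusters. For symmetric signs the number of ordered disagreeing pairs is even, so the halving in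
`numDis` is exact and an optimal clustering of `G` gives a balanced one of `H` with `4 · OPT_G`
disagreements.

Conversely, given a clustering `c` of `H`, choose for every `u ∈ V` one of its copies `u`, `u'`
and cluster `u` as `c` clusters the chosen copy. Averaged over all `2^|V|` choices, a pair
`u ≠ v` disagrees with frequency exactly a quarter of the number of disagreements of `c` among the
four edges between `{u, u'}` and `{v, v'}`. Hence some choice has at most a quarter of the
disagreements of `c`, i.e. `4 · OPT_G ≤ numDis c`.
-/

lemma isDis_comm {W : Type*} {sg : W → W → Bool} (hsym : ∀ u v, sg u v = sg v u)
    (c : W → ℕ) (u v : W) : isDis sg c u v = isDis sg c v u := by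
  simp only [isDis, hsym u v, eq_comm]

section OrderedCount

variable {W : Type*} [Fintype W] [DecidableEq W]

def disIndicator (sg : W → W → Bool) (c : W → ℕ) (u v : W) : ℕ :=
  if u ≠ v ∧ isDis sg c u v = true then 1 else 0

def orderedNumDis (sg : W → W → Bool) (c : W → ℕ) : ℕ :=
  ∑ u, ∑ v, disIndicator sg c u v

lemma numDis_eq_orderedNumDis_div_two (sg : W → W → Bool) (c : W → ℕ) :
    numDis sg c = orderedNumDis sg c / 2 := by
  rw [numDis, card_filter, Fintype.sum_prod_type]
  rfl

lemma even_orderedNumDis {sg : W → W → Bool} (hsym : ∀ u v, sg u v = sg v u) (c : W → ℕ) :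
    Even (orderedNumDis sg c) := by
  rw [← ZMod.natCast_eq_zero_iff_even, orderedNumDis, ← Fintype.sum_prod_type', Nat.cast_sum]
  refine sum_ninvolution Prod.swap (fun p => ?_) (fun p hp h => ?_) (fun _ => mem_univ _)
    Prod.swap_swap
  · simp only [disIndicator, Prod.fst_swap, Prod.snd_swap, ne_comm, isDis_comm hsym c p.2]
    split_ifs <;> decide
  · have hdiag : p.1 = p.2 := congrArg Prod.snd h
    simp [disIndicator, hdiag] at hp

end OrderedCount

section Averaging

variable {V M : Type*} [Fintype V] [DecidableEq V] [AddCommMonoid M]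

lemma sum_update_not (u : V) (F : (V → Bool) → M) :
    ∑ t, F (Function.update t u (!t u)) = ∑ t, F t := by
  have hinv : Function.Involutive fun t : V → Bool => Function.update t u (!t u) := by
    intro t
    simp
  exact Equiv.sum_comp hinv.toPerm F

lemma four_smul_sum_apply_apply {u v : V} (huv : u ≠ v) (f : Bool → Bool → M) :
    4 • ∑ t : V → Bool, f (t u) (t v) = Fintype.card (V → Bool) • ∑ a, ∑ b, f a b := by
  have flip_u : ∑ t : V → Bool, f (!t u) (t v) = ∑ t : V → Bool, f (t u) (t v) := by
    simpa [Function.update_of_ne huv.symm] using sum_update_not u fun t => f (t u) (t v)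
  have flip_v : ∀ g : Bool → Bool → M,
      ∑ t : V → Bool, g (t u) (!t v) = ∑ t : V → Bool, g (t u) (t v) := fun g => by
    simpa [Function.update_of_ne huv] using sum_update_not v fun t => g (t u) (t v)
  calc 4 • ∑ t : V → Bool, f (t u) (t v)
      = ∑ t : V → Bool,
          (f (t u) (t v) + f (!t u) (t v) + f (t u) (!t v) + f (!t u) (!t v)) := by
        rw [sum_add_distrib, sum_add_distrib, sum_add_distrib, flip_u,
          flip_v fun a b => f a b, flip_v fun a b => f (!a) b, flip_u]
        abel
    _ = ∑ _t : V → Bool, ∑ a, ∑ b, f a b := by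
        refine sum_congr rfl fun t _ => ?_
        cases t u <;> cases t v <;>
          simp only [Fintype.sum_bool, Bool.not_true, Bool.not_false] <;> abel
    _ = Fintype.card (V → Bool) • ∑ a, ∑ b, f a b := by
        rw [sum_const, card_univ]

end Averaging

section Mirror

variable {V : Type*}

def inCopy (a : Bool) (u : V) : V ⊕ V :=
  bif a then Sum.inr u else Sum.inl u

lemma inCopy_ne_inCopy {u v : V} (huv : u ≠ v) (a b : Bool) : inCopy a u ≠ inCopy b v := by
  cases a <;> cases b <;> simp [inCopy, huv]

lemma sum_eq_sum_sum_inCopy [Fintype V] {M : Type*} [AddCommMonoid M] (f : V ⊕ V → M) :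
    ∑ x, f x = ∑ a, ∑ u, f (inCopy a u) := by
  simp [Fintype.sum_sum_type, inCopy, add_comm]

def hybrid (c : V ⊕ V → ℕ) (t : V → Bool) : V → ℕ :=
  fun u => c (inCopy (t u) u)

variable [DecidableEq V]

lemma mirrorSign_inCopy (sg : V → V → Bool) {u v : V} (huv : u ≠ v) (a b : Bool) :
    mirrorSign sg (inCopy a u) (inCopy b v) = sg u v := by
  cases a <;> cases b <;> simp [mirrorSign, inCopy, huv]

lemma disIndicator_mirrorSign_sumElim (sg : V → V → Bool) (c : V → ℕ) (a b : Bool)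
    (u v : V) :
    disIndicator (mirrorSign sg) (Sum.elim c c) (inCopy a u) (inCopy b v)
      = disIndicator sg c u v := by
  have hc : ∀ a w, Sum.elim c c (inCopy a w) = c w := by
    intro a w
    cases a <;> rfl
  by_cases huv : u = v
  · subst huv
    cases a <;> cases b <;> simp [disIndicator, isDis, mirrorSign, inCopy]
  · simp [disIndicator, isDis, hc, mirrorSign_inCopy sg huv, inCopy_ne_inCopy huv, huv]

lemma disIndicator_hybrid (sg : V → V → Bool) (c : V ⊕ V → ℕ) (t : V → Bool) {u v : V}
    (huv : u ≠ v) : disIndicator sg (hybrid c t) u v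
      = disIndicator (mirrorSign sg) c (inCopy (t u) u) (inCopy (t v) v) := by
  refine if_congr (and_congr (iff_of_true huv (inCopy_ne_inCopy huv _ _)) ?_) rfl rfl
  rw [isDis, isDis, mirrorSign_inCopy sg huv]
  rfl

variable [Fintype V]

lemma orderedNumDis_mirrorSign_sumElim (sg : V → V → Bool) (c : V → ℕ) :
    orderedNumDis (mirrorSign sg) (Sum.elim c c) = 4 * orderedNumDis sg c := by
  simp only [orderedNumDis, sum_eq_sum_sum_inCopy, disIndicator_mirrorSign_sumElim,
    Fintype.sum_bool, sum_add_distrib]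
  ring

lemma numDis_mirrorSign_sumElim {sg : V → V → Bool} (hsym : ∀ u v, sg u v = sg v u)
    (c : V → ℕ) : numDis (mirrorSign sg) (Sum.elim c c) = 4 * numDis sg c := by
  rw [numDis_eq_orderedNumDis_div_two, numDis_eq_orderedNumDis_div_two,
    orderedNumDis_mirrorSign_sumElim]
  obtain ⟨m, hm⟩ := even_orderedNumDis hsym c
  omega

lemma four_mul_sum_disIndicator_hybrid_le (sg : V → V → Bool) (c : V ⊕ V → ℕ) (u v : V) :
    4 * ∑ t, disIndicator sg (hybrid c t) u v
      ≤ Fintype.card (V → Bool)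
        * ∑ a, ∑ b, disIndicator (mirrorSign sg) c (inCopy a u) (inCopy b v) := by
  by_cases huv : u = v
  · simp [disIndicator, huv]
  · simp only [disIndicator_hybrid sg c _ huv]
    exact (four_smul_sum_apply_apply huv
      fun a b => disIndicator (mirrorSign sg) c (inCopy a u) (inCopy b v)).le

lemma four_mul_sum_orderedNumDis_hybrid_le (sg : V → V → Bool) (c : V ⊕ V → ℕ) :
    4 * ∑ t, orderedNumDis sg (hybrid c t)
      ≤ Fintype.card (V → Bool) * orderedNumDis (mirrorSign sg) c := by
  calc 4 * ∑ t, orderedNumDis sg (hybrid c t)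
      = ∑ u, ∑ v, 4 * ∑ t, disIndicator sg (hybrid c t) u v := by
        simp only [orderedNumDis, mul_sum]
        rw [sum_comm]
        exact sum_congr rfl fun u _ => sum_comm
    _ ≤ ∑ u, ∑ v, Fintype.card (V → Bool)
          * ∑ a, ∑ b, disIndicator (mirrorSign sg) c (inCopy a u) (inCopy b v) :=
        sum_le_sum fun u _ => sum_le_sum fun v _ => four_mul_sum_disIndicator_hybrid_le sg c u v
    _ = Fintype.card (V → Bool) * orderedNumDis (mirrorSign sg) c := by
        simp only [orderedNumDis, sum_eq_sum_sum_inCopy, Fintype.sum_bool, sum_add_distrib,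
          mul_add, mul_sum]

lemma exists_four_mul_numDis_hybrid_le (sg : V → V → Bool) (c : V ⊕ V → ℕ) :
    ∃ t, 4 * numDis sg (hybrid c t) ≤ numDis (mirrorSign sg) c := by
  obtain ⟨t, -, ht⟩ := exists_le_of_sum_le (s := univ) univ_nonempty
    (f := fun t => 4 * orderedNumDis sg (hybrid c t))
    (g := fun _ => orderedNumDis (mirrorSign sg) c) (by
      rw [sum_const, card_univ, smul_eq_mul, ← mul_sum]
      exact four_mul_sum_orderedNumDis_hybrid_le sg c)
  refine ⟨t, ?_⟩
  rw [numDis_eq_orderedNumDis_div_two, numDis_eq_orderedNumDis_div_two]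
  omega

end Mirror

/-- the minimum number of disagreements over balanced clusterings
of the mirrored double equals 4 times the unconstrained optimum of G. -/
theorem stmt18 {V : Type*} [Fintype V] [DecidableEq V]
    (sign : V → V → Bool) (hsym : ∀ u v, sign u v = sign v u) :
    sInf {n | ∃ c : V ⊕ V → ℕ,
        (∀ k, (univ.filter fun v : V => c (Sum.inl v) = k).card
            = (univ.filter fun v : V => c (Sum.inr v) = k).card) ∧
        numDis (mirrorSign sign) c = n}
      = 4 * sInf {n | ∃ c : V → ℕ, numDis sign c = n} := by
  obtain ⟨c₀, hc₀⟩ := Nat.sInf_mem (s := {n | ∃ c : V → ℕ, numDis sign c = n})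
    ⟨_, fun _ => 0, rfl⟩
  apply le_antisymm
  · refine Nat.sInf_le ⟨Sum.elim c₀ c₀, fun _ => rfl, ?_⟩
    rw [numDis_mirrorSign_sumElim hsym, hc₀]
  · refine le_csInf ⟨_, Sum.elim c₀ c₀, fun _ => rfl, rfl⟩ ?_
    rintro _ ⟨c, -, rfl⟩
    obtain ⟨t, ht⟩ := exists_four_mul_numDis_hybrid_le sign c
    have hopt : sInf {n | ∃ c : V → ℕ, numDis sign c = n} ≤ numDis sign (hybrid c t) :=
      Nat.sInf_le ⟨_, rfl⟩
    omega
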